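/- arXiv:1710.03160 — 2 statements merged into one kernel-verified Lean document; each statement's English description precedes it below -/
import Mathlib

section
/- Let x ≥ 1 and let β ≥ 0 satisfy sinh(β)/β = x (with the convention sinh(β)/β = 1 at β = 0). Define φ : [0,1] → ℝ by φ(u) = βu − 2·log((e^{βu} + e^β)/(1 + e^β)). Then φ(0) = 0, ∫₀¹ exp(φ(u)) du = x, (1/2)∫₀¹ (φ'(u))² du = (1/2)β² − β·tanh(β/2), and this value equals J_BS(x); that is, φ attains the infimum defining J_BS(x). -/
open MeasureTheory Set

/-- `IsAC f g` expresses that `f` is absolutely continuous on `[0,1]` with `f 0 = 0`: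
`g` is its (integrable) derivative, `g²` is integrable (finite energy), and
`f t = ∫₀ᵗ g(s) ds` on `[0,1]`. -/
def IsAC (f g : ℝ → ℝ) : Prop :=
  IntervalIntegrable g volume 0 1 ∧
  IntervalIntegrable (fun t => (g t) ^ 2) volume 0 1 ∧
  ∀ t ∈ Icc (0:ℝ) 1, f t = ∫ s in (0:ℝ)..t, g s

/-- The energy `(1/2)∫₀¹ (f'(t))² dt` of a path with derivative `g`. -/
noncomputable def energy (g : ℝ → ℝ) : ℝ :=
  (1 / 2) * ∫ t in (0:ℝ)..1, (g t) ^ 2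

/-- The rate function `J_BS(x)` for an Asian option with averaging starting at time `0`
in the Black-Scholes model: the infimum of `(1/2)∫₀¹ (φ'(u))² du` over absolutely
continuous `φ` with `φ(0) = 0` and `∫₀¹ exp(φ(u)) du = x`. -/
noncomputable def JBS (x : ℝ) : ℝ :=
  sInf { E | ∃ f g : ℝ → ℝ, IsAC f g ∧ (∫ u in (0:ℝ)..1, Real.exp (f u)) = x ∧ E = energy g }

/-- The rate function `J_fwd(x, τ)` for a forward start Asian option in the
Black-Scholes model: the infimum of `(1/2)∫₀¹ (f'(t))² dt` over absolutely continuous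
`f` with `f(0) = 0` and `(1/(1-τ))∫_τ¹ exp(f(t)) dt = x`. -/
noncomputable def Jfwd (x τ : ℝ) : ℝ :=
  sInf { E | ∃ f g : ℝ → ℝ, IsAC f g ∧
    (1 / (1 - τ)) * (∫ t in τ..1, Real.exp (f t)) = x ∧ E = energy g }

open intervalIntegral Real Filter Topology

/-!
Let `(f, g)` be admissible, `F` the primitive of `g`, `M = F T` its maximum on `[0, 1]` and
`a = exp M`. The function `calibration a` is a primitive of `y ↦ √(a - exp y)` vanishing on
`[log a, ∞)`. Integrating `g² ≥ ± 2 c √(a - exp F) g - c² (a - exp F)` (sign `+` before `T`,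
`-` after) with the chain rule for the absolutely continuous `F` gives, for every `c ≥ 0`,
`energy g ≥ c (γ cosh (γ/2) - 2 sinh (γ/2)) - c² (cosh (γ/2)² - x) / 2` where
`cosh (γ/2)² = a`. Optimising in `c` yields `energy g ≥ energyBound x γ`. The derivative of
`energyBound x` has the sign of `sinh γ - γ x`, so it is smallest at `γ = β`, where it equals
`β²/2 - β tanh (β/2)`, the energy of the explicit path.
-/

theorem Real.sinh_lt_mul_cosh {t : ℝ} (ht : 0 < t) : sinh t < t * cosh t := by
  have hmono : StrictMonoOn (fun t => t * cosh t - sinh t) (Ici 0) := by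
    refine strictMonoOn_of_hasDerivWithinAt_pos (f' := fun s => s * sinh s) (convex_Ici 0)
      (by fun_prop) (fun s _ => ?_) fun s hs => ?_
    · exact ((((hasDerivAt_id' s).fun_mul (hasDerivAt_cosh s)).fun_sub
        (hasDerivAt_sinh s)).congr_deriv (by ring)).hasDerivWithinAt
    · rw [interior_Ici] at hs
      exact mul_pos hs (sinh_pos_iff.2 hs)
  simpa using hmono self_mem_Ici ht.le ht

theorem Real.monotoneOn_sinh_div_self : MonotoneOn (fun t => sinh t / t) (Ioi 0) := by
  refine monotoneOn_of_hasDerivWithinAt_nonneg (convex_Ioi 0)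
    (fun s hs => (continuous_sinh.continuousAt.div continuousAt_id hs.ne').continuousWithinAt)
    (fun s hs => ((hasDerivAt_sinh s).div (hasDerivAt_id s) ?_).hasDerivWithinAt) fun s hs => ?_
  · rw [interior_Ioi] at hs; exact hs.ne'
  · rw [interior_Ioi] at hs
    have := sinh_lt_mul_cosh hs
    simp only [id_eq, mul_one]
    exact div_nonneg (by linarith) (sq_nonneg _)

theorem hasDerivAt_exp_const_mul (β u : ℝ) :
    HasDerivAt (fun u => exp (β * u)) (exp (β * u) * β) u := by
  simpa using ((hasDerivAt_id u).const_mul β).exp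

noncomputable def optimalPath (β u : ℝ) : ℝ :=
  β * u - 2 * log ((exp (β * u) + exp β) / (1 + exp β))

theorem optimalPath_zero (β : ℝ) : optimalPath β 0 = 0 := by
  simp [optimalPath, div_self (by positivity : 1 + exp β ≠ 0)]

theorem hasDerivAt_optimalPath (β u : ℝ) :
    HasDerivAt (optimalPath β) (β - 2 * β * exp (β * u) / (exp (β * u) + exp β)) u := by
  have hlog := ((((hasDerivAt_exp_const_mul β u).add_const (exp β)).div_const (1 + exp β)).log
    (by positivity)).const_mul 2
  refine (((hasDerivAt_id u).const_mul β).sub hlog).congr_deriv ?_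
  field_simp

theorem continuous_optimalPath (β : ℝ) : Continuous (optimalPath β) :=
  continuous_iff_continuousAt.2 fun u => (hasDerivAt_optimalPath β u).continuousAt

theorem deriv_optimalPath (β : ℝ) :
    deriv (optimalPath β) = fun u => β - 2 * β * exp (β * u) / (exp (β * u) + exp β) :=
  funext fun u => (hasDerivAt_optimalPath β u).deriv

theorem continuous_deriv_optimalPath (β : ℝ) : Continuous (deriv (optimalPath β)) := by
  rw [deriv_optimalPath]
  fun_prop (disch := intro u; positivity)

theorem exp_optimalPath (β u : ℝ) :
    exp (optimalPath β u) = exp (β * u) * (1 + exp β) ^ 2 / (exp (β * u) + exp β) ^ 2 := by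
  rw [optimalPath, exp_sub, ← log_rpow (by positivity), exp_log (by positivity)]
  norm_cast
  rw [div_pow, div_div_eq_mul_div]

theorem integral_exp_optimalPath {β : ℝ} (hβ : β ≠ 0) :
    ∫ u in (0:ℝ)..1, exp (optimalPath β u) = sinh β / β := by
  have hder : ∀ u ∈ uIcc (0:ℝ) 1,
      HasDerivAt (fun u => -(1 + exp β) ^ 2 / (β * (exp (β * u) + exp β)))
        (exp (optimalPath β u)) u := by
    intro u _
    have hexp := hasDerivAt_exp_const_mul β u
    refine (((hexp.add_const (exp β)).const_mul β).fun_inv (by positivity)).const_mul _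
      |>.congr_deriv ?_
    rw [exp_optimalPath]
    field_simp
  rw [integral_eq_sub_of_hasDerivAt hder
    ((continuous_exp.comp (continuous_optimalPath β)).intervalIntegrable 0 1), sinh_eq, exp_neg]
  simp only [mul_one, mul_zero, exp_zero]
  field_simp
  ring

theorem integral_sq_deriv_optimalPath (β : ℝ) :
    ∫ u in (0:ℝ)..1, deriv (optimalPath β) u ^ 2 = β ^ 2 - 2 * β * tanh (β / 2) := by
  have hder : ∀ u ∈ uIcc (0:ℝ) 1,
      HasDerivAt (fun u => β ^ 2 * u + 4 * β * exp β / (exp β + exp (β * u)))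
        (deriv (optimalPath β) u ^ 2) u := by
    intro u _
    have hexp := hasDerivAt_exp_const_mul β u
    refine (((hasDerivAt_id u).const_mul (β ^ 2)).add
      (((hexp.const_add (exp β)).fun_inv (by positivity)).const_mul (4 * β * exp β))).congr_deriv ?_
    rw [deriv_optimalPath]
    field_simp
    ring
  rw [integral_eq_sub_of_hasDerivAt hder
    (((continuous_deriv_optimalPath β).pow 2).intervalIntegrable 0 1)]
  have he : exp β = exp (β / 2) ^ 2 := by rw [← exp_nat_mul]; ring_nf
  rw [tanh_eq_sinh_div_cosh, sinh_eq, cosh_eq, exp_neg]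
  simp only [mul_one, mul_zero, exp_zero]
  rw [he]
  field_simp
  ring

theorem isAC_optimalPath (β : ℝ) : IsAC (optimalPath β) (deriv (optimalPath β)) := by
  have hcont := continuous_deriv_optimalPath β
  refine ⟨hcont.intervalIntegrable 0 1, (hcont.pow 2).intervalIntegrable 0 1, fun t _ => ?_⟩
  rw [integral_deriv_eq_sub (fun u _ => (hasDerivAt_optimalPath β u).differentiableAt)
    (hcont.intervalIntegrable 0 t), optimalPath_zero, sub_zero]

theorem AbsolutelyContinuousOnInterval.comp_lipschitzWith {F A : ℝ → ℝ} {a b : ℝ} {K : NNReal}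
    (hA : LipschitzWith K A) (hF : AbsolutelyContinuousOnInterval F a b) :
    AbsolutelyContinuousOnInterval (A ∘ F) a b := by
  have hK := Tendsto.const_mul (K : ℝ) hF
  rw [mul_zero] at hK
  refine squeeze_zero (fun _ => Finset.sum_nonneg fun _ _ => dist_nonneg) (fun E => ?_) hK
  rw [Finset.mul_sum]
  exact Finset.sum_le_sum fun i _ => hA.dist_le_mul _ _

theorem AbsolutelyContinuousOnInterval.integral_comp_mul_deriv {F F' A A' : ℝ → ℝ} {a b K : ℝ}
    (hF : AbsolutelyContinuousOnInterval F a b)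
    (hF' : ∀ᵐ t, t ∈ uIcc a b → HasDerivAt F (F' t) t)
    (hA : ∀ y, HasDerivAt A (A' y) y) (hA' : ∀ y, |A' y| ≤ K) :
    ∫ t in a..b, A' (F t) * F' t = A (F b) - A (F a) := by
  have hLip : LipschitzWith K.toNNReal A :=
    lipschitzWith_of_nnnorm_deriv_le (fun y => (hA y).differentiableAt) fun y => by
      rw [(hA y).deriv, ← NNReal.coe_le_coe, coe_nnnorm, Real.norm_eq_abs, Real.coe_toNNReal']
      exact (hA' y).trans (le_max_left _ _)
  show _ = (A ∘ F) b - (A ∘ F) a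
  rw [← (hF.comp_lipschitzWith hLip).integral_deriv_eq_sub]
  refine integral_congr_ae ?_
  filter_upwards [hF'] with t ht ht'
  exact (((hA (F t)).comp t (ht (uIoc_subset_uIcc ht'))).deriv).symm

theorem two_mul_sub_le_integral_sq_add_integral_sq {F g A α : ℝ → ℝ} {p q K : ℝ} (hpq : p ≤ q)
    (hF : AbsolutelyContinuousOnInterval F p q) (hF' : ∀ᵐ t, t ∈ uIcc p q → HasDerivAt F (g t) t)
    (hg : IntervalIntegrable g volume p q) (hg2 : IntervalIntegrable (fun t => g t ^ 2) volume p q)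
    (hA : ∀ y, HasDerivAt A (α y) y) (hα : Continuous α) (hαK : ∀ y, |α y| ≤ K) :
    2 * (A (F q) - A (F p)) ≤ (∫ t in p..q, g t ^ 2) + ∫ t in p..q, α (F t) ^ 2 := by
  have hαF : ContinuousOn (fun t => α (F t)) (uIcc p q) := hα.comp_continuousOn hF.continuousOn
  have hαF2 : IntervalIntegrable (fun t => α (F t) ^ 2) volume p q :=
    (hαF.pow 2).intervalIntegrable
  rw [← hF.integral_comp_mul_deriv hF' hA hαK, ← intervalIntegral.integral_const_mul,
    ← integral_add hg2 hαF2]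
  refine integral_mono_on hpq ((hg.continuousOn_mul hαF).const_mul 2) (hg2.add hαF2) fun t _ => ?_
  nlinarith [sq_nonneg (g t - α (F t))]

noncomputable def calibration (a y : ℝ) : ℝ :=
  2 * √(a - exp y) - √a * (log (√a + √(a - exp y)) - log (√a - √(a - exp y)))

theorem sqrt_sub_exp_lt_sqrt {a : ℝ} (ha : 0 < a) (y : ℝ) : √(a - exp y) < √a :=
  (Real.sqrt_lt_sqrt_iff_of_pos ha).2 (by linarith [exp_pos y])

theorem continuous_calibration {a : ℝ} (ha : 0 < a) : Continuous (calibration a) := by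
  have h := sqrt_sub_exp_lt_sqrt ha
  unfold calibration
  fun_prop (disch := intro y; linarith [h y, Real.sqrt_nonneg (a - exp y)])

theorem calibration_of_le {a y : ℝ} (hy : a ≤ exp y) : calibration a y = 0 := by
  simp [calibration, Real.sqrt_eq_zero_of_nonpos (sub_nonpos.2 hy)]

theorem hasDerivAt_calibration_of_lt {a y : ℝ} (hy : exp y < a) :
    HasDerivAt (calibration a) √(a - exp y) y := by
  have h1 : 0 < a - exp y := by linarith
  set t := √(a - exp y) with htdef
  set s := √a
  have ht2 : t ^ 2 = a - exp y := Real.sq_sqrt h1.le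
  have hs2 : s ^ 2 = a := Real.sq_sqrt (by linarith [exp_pos y])
  have htpos : 0 < t := Real.sqrt_pos.2 h1
  have hts : t < s := sqrt_sub_exp_lt_sqrt (by linarith [exp_pos y]) y
  have hT : HasDerivAt (fun y => √(a - exp y)) (-exp y / (2 * t)) y := by
    simpa using ((hasDerivAt_exp y).const_sub a).sqrt h1.ne'
  have hlog := ((hT.const_add s).log (by linarith)).sub ((hT.const_sub s).log (by linarith))
  refine ((hT.const_mul 2).sub (hlog.const_mul s)).congr_deriv ?_
  rw [← htdef]
  have : s - t ≠ 0 := by linarith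
  have : s + t ≠ 0 := by linarith
  field_simp
  linear_combination 2 * t ^ 2 * (ht2 - hs2)

theorem hasDerivAt_calibration {a : ℝ} (ha : 0 < a) (y : ℝ) :
    HasDerivAt (calibration a) √(a - exp y) y := by
  refine hasDerivAt_of_hasDerivAt_of_ne' (x := log a) (fun z hz => ?_)
    (continuous_calibration ha).continuousAt
    (by fun_prop : Continuous fun y => √(a - exp y)).continuousAt y
  rcases lt_or_gt_of_ne hz with hz | hz
  · exact hasDerivAt_calibration_of_lt ((exp_lt_exp.2 hz).trans_eq (exp_log ha))
  · have hle : ∀ᶠ w in 𝓝 z, a ≤ exp w :=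
      (lt_mem_nhds hz).mono fun w hw => (exp_log ha).symm.le.trans (exp_le_exp.2 hw.le)
    rw [Real.sqrt_eq_zero_of_nonpos (by linarith [hle.self_of_nhds])]
    exact (hasDerivAt_const z 0).congr_of_eventuallyEq (hle.mono fun w hw => calibration_of_le hw)

theorem monotone_calibration {a : ℝ} (ha : 0 < a) : Monotone (calibration a) :=
  monotone_of_hasDerivAt_nonneg (hasDerivAt_calibration ha) fun _ => Real.sqrt_nonneg _

theorem calibration_cosh_sq_zero {γ : ℝ} (hγ : 0 ≤ γ) :
    calibration (cosh (γ / 2) ^ 2) 0 = 2 * sinh (γ / 2) - γ * cosh (γ / 2) := by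
  have hc : √(cosh (γ / 2) ^ 2) = cosh (γ / 2) := Real.sqrt_sq (cosh_pos _).le
  have hs : √(cosh (γ / 2) ^ 2 - exp 0) = sinh (γ / 2) := by
    rw [exp_zero, ← sinh_sq, Real.sqrt_sq (sinh_nonneg_iff.2 (by linarith))]
  rw [calibration, hc, hs, cosh_add_sinh, cosh_sub_sinh, log_exp, log_exp]
  ring

theorem energy_ge_of_isMaxOn {F g : ℝ → ℝ} {T c : ℝ} (hF : AbsolutelyContinuousOnInterval F 0 1)
    (hF' : ∀ᵐ t, t ∈ uIcc 0 1 → HasDerivAt F (g t) t) (hg : IntervalIntegrable g volume 0 1)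
    (hg2 : IntervalIntegrable (fun t => g t ^ 2) volume 0 1) (hT : T ∈ Icc (0:ℝ) 1)
    (hmax : IsMaxOn F (Icc 0 1) T) (hc : 0 ≤ c) :
    -c * calibration (exp (F T)) (F 0) - c ^ 2 / 2 * (exp (F T) - ∫ t in (0:ℝ)..1, exp (F t))
      ≤ energy g := by
  set a := exp (F T)
  have ha : 0 < a := exp_pos _
  have hT' : T ∈ uIcc (0:ℝ) 1 := uIcc_of_le (zero_le_one' ℝ) ▸ hT
  have h0T : uIcc 0 T ⊆ uIcc (0:ℝ) 1 := uIcc_subset_uIcc left_mem_uIcc hT'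
  have hT1 : uIcc T 1 ⊆ uIcc (0:ℝ) 1 := uIcc_subset_uIcc hT' right_mem_uIcc
  have hA : ∀ y, HasDerivAt (fun y => c * calibration a y) (c * √(a - exp y)) y :=
    fun y => (hasDerivAt_calibration ha y).const_mul c
  have hαK : ∀ y, |c * √(a - exp y)| ≤ c * √a := fun y => by
    rw [abs_of_nonneg (by positivity)]
    exact mul_le_mul_of_nonneg_left (Real.sqrt_le_sqrt (by linarith [exp_pos y])) hc
  have hα : Continuous fun y => c * √(a - exp y) := by fun_prop
  have hleft := two_mul_sub_le_integral_sq_add_integral_sq hT.1 (hF.mono h0T)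
    (hF'.mono fun t ht ht' => ht (h0T ht')) (hg.mono_set h0T) (hg2.mono_set h0T) hA hα hαK
  have hright := two_mul_sub_le_integral_sq_add_integral_sq hT.2 (hF.mono hT1)
    (hF'.mono fun t ht ht' => ht (hT1 ht')) (hg.mono_set hT1) (hg2.mono_set hT1)
    (fun y => (hA y).neg) hα.neg fun y => (abs_neg _).trans_le (hαK y)
  simp only [neg_sq, Pi.neg_apply] at hright
  have hαF : ∀ t ∈ uIcc (0:ℝ) 1, (c * √(a - exp (F t))) ^ 2 = c ^ 2 * (a - exp (F t)) := by
    intro t ht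
    rw [uIcc_of_le zero_le_one] at ht
    rw [mul_pow, Real.sq_sqrt (sub_nonneg.2 (exp_le_exp.2 (hmax ht)))]
  have hsq : IntervalIntegrable (fun t => (c * √(a - exp (F t))) ^ 2) volume 0 1 :=
    ((hα.comp_continuousOn hF.continuousOn).pow 2).intervalIntegrable
  have hexpF : IntervalIntegrable (fun t => exp (F t)) volume 0 1 :=
    (continuous_exp.comp_continuousOn hF.continuousOn).intervalIntegrable
  have hsq_total : ∫ t in (0:ℝ)..1, (c * √(a - exp (F t))) ^ 2
      = c ^ 2 * (a - ∫ t in (0:ℝ)..1, exp (F t)) := by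
    rw [integral_congr hαF, intervalIntegral.integral_const_mul,
      integral_sub intervalIntegrable_const hexpF, intervalIntegral.integral_const]
    simp
  have hcalT : calibration a (F T) = 0 := calibration_of_le le_rfl
  have hcal1 : calibration a (F 1) ≤ 0 :=
    hcalT ▸ monotone_calibration ha (hmax (right_mem_Icc.2 zero_le_one))
  rw [← integral_add_adjacent_intervals (hsq.mono_set h0T) (hsq.mono_set hT1)] at hsq_total
  rw [energy, ← integral_add_adjacent_intervals (hg2.mono_set h0T) (hg2.mono_set hT1)]
  rw [hcalT] at hleft hright
  linarith [mul_nonpos_of_nonneg_of_nonpos hc hcal1]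

theorem sq_div_le_of_forall_mul_sub_le {h d E : ℝ} (hh : 0 < h)
    (H : ∀ c, 0 ≤ c → c * h - c ^ 2 / 2 * d ≤ E) : 0 < d ∧ h ^ 2 / (2 * d) ≤ E := by
  have hd : 0 < d := by
    by_contra! hd
    have := H ((|E| + 1) / h) (by positivity)
    have : (|E| + 1) / h * h = |E| + 1 := div_mul_cancel₀ _ hh.ne'
    nlinarith [le_abs_self E, sq_nonneg ((|E| + 1) / h)]
  refine ⟨hd, ?_⟩
  have := H (h / d) (by positivity)
  calc h ^ 2 / (2 * d) = h / d * h - (h / d) ^ 2 / 2 * d := by field_simp; ring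
    _ ≤ E := this

noncomputable def energyBound (x t : ℝ) : ℝ :=
  (t * cosh (t / 2) - 2 * sinh (t / 2)) ^ 2 / (2 * (cosh (t / 2) ^ 2 - x))

theorem hasDerivAt_energyBound {x t : ℝ} (hden : cosh (t / 2) ^ 2 - x ≠ 0) :
    HasDerivAt (energyBound x)
      ((t * cosh (t / 2) - 2 * sinh (t / 2)) * sinh (t / 2) / (2 * (cosh (t / 2) ^ 2 - x) ^ 2)
        * (sinh t - t * x)) t := by
  have hhalf : HasDerivAt (fun t : ℝ => t / 2) (1 / 2) t := (hasDerivAt_id t).div_const 2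
  have hN : HasDerivAt (fun t => (t * cosh (t / 2) - 2 * sinh (t / 2)) ^ 2)
      (2 * (t * cosh (t / 2) - 2 * sinh (t / 2)) * (t * sinh (t / 2) / 2)) t :=
    ((((hasDerivAt_id' t).fun_mul hhalf.cosh).fun_sub (hhalf.sinh.const_mul 2)).fun_pow 2)
      |>.congr_deriv (by ring)
  have hD : HasDerivAt (fun t => 2 * (cosh (t / 2) ^ 2 - x)) (2 * cosh (t / 2) * sinh (t / 2)) t :=
    (((hhalf.cosh.fun_pow 2).sub_const x).const_mul 2).congr_deriv (by ring)
  refine (hN.div hD (mul_ne_zero two_ne_zero hden)).congr_deriv ?_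
  rw [show sinh t = 2 * sinh (t / 2) * cosh (t / 2) by rw [← sinh_two_mul]; ring_nf]
  field_simp
  ring

theorem energyBound_le {x β γ : ℝ} (hβ : 0 < β) (hx : sinh β / β = x) (hγ : 0 < γ)
    (hγx : x < cosh (γ / 2) ^ 2) : energyBound x β ≤ energyBound x γ := by
  have hβx : x < cosh (β / 2) ^ 2 := by
    have h := sinh_lt_mul_cosh (half_pos hβ)
    have hC := cosh_pos (β / 2)
    rw [← hx, div_lt_iff₀ hβ, show sinh β = 2 * sinh (β / 2) * cosh (β / 2) by
      rw [← sinh_two_mul]; ring_nf]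
    nlinarith
  have hdom : ∀ t ∈ uIcc β γ, 0 < t ∧ x < cosh (t / 2) ^ 2 := by
    intro t ht
    have hmin : 0 < min β γ ∧ x < cosh (min β γ / 2) ^ 2 := by
      rcases min_choice β γ with h | h <;> rw [h] <;> constructor <;> assumption
    have h0 : 0 < t := hmin.1.trans_le ht.1
    have hcosh : cosh (min β γ / 2) ≤ cosh (t / 2) := by
      rw [cosh_le_cosh, abs_of_pos (half_pos hmin.1), abs_of_pos (half_pos h0)]
      linarith [ht.1]
    exact ⟨h0, hmin.2.trans_le (pow_le_pow_left₀ (cosh_pos _).le hcosh 2)⟩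
  have hderiv : ∀ t ∈ uIcc β γ, HasDerivAt (energyBound x)
      ((t * cosh (t / 2) - 2 * sinh (t / 2)) * sinh (t / 2) / (2 * (cosh (t / 2) ^ 2 - x) ^ 2)
        * (sinh t - t * x)) t :=
    fun t ht => hasDerivAt_energyBound (by linarith [(hdom t ht).2])
  have hfactor : ∀ t ∈ uIcc β γ, 0 < (t * cosh (t / 2) - 2 * sinh (t / 2)) * sinh (t / 2)
      / (2 * (cosh (t / 2) ^ 2 - x) ^ 2) := by
    intro t ht
    obtain ⟨h0, hden⟩ := hdom t ht
    have := sinh_lt_mul_cosh (half_pos h0)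
    have := cosh_pos (t / 2)
    have := sinh_pos_iff.2 (half_pos h0)
    exact div_pos (mul_pos (by nlinarith) this) (by nlinarith)
  have hsign_ge : ∀ t, β ≤ t → t * x ≤ sinh t := fun t ht => by
    have : sinh β / β ≤ sinh t / t := monotoneOn_sinh_div_self hβ (hβ.trans_le ht) ht
    rwa [hx, le_div_iff₀ (hβ.trans_le ht), mul_comm] at this
  have hsign_le : ∀ t, 0 < t → t ≤ β → sinh t ≤ t * x := fun t h0 ht => by
    have : sinh t / t ≤ sinh β / β := monotoneOn_sinh_div_self h0 hβ ht
    rwa [hx, div_le_iff₀ h0, mul_comm] at this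
  have hcont : ContinuousOn (energyBound x) (uIcc β γ) :=
    fun t ht => (hderiv t ht).continuousAt.continuousWithinAt
  rcases le_total β γ with h | h
  · rw [uIcc_of_le h] at hdom hderiv hfactor hcont
    refine monotoneOn_of_hasDerivWithinAt_nonneg (convex_Icc β γ) hcont
      (fun t ht => (hderiv t (interior_subset ht)).hasDerivWithinAt) (fun t ht => ?_)
      (left_mem_Icc.2 h) (right_mem_Icc.2 h) h
    rw [interior_Icc] at ht
    exact mul_nonneg (hfactor t (Ioo_subset_Icc_self ht)).le
      (sub_nonneg.2 (hsign_ge t ht.1.le))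
  · rw [uIcc_of_ge h] at hdom hderiv hfactor hcont
    refine antitoneOn_of_hasDerivWithinAt_nonpos (convex_Icc γ β) hcont
      (fun t ht => (hderiv t (interior_subset ht)).hasDerivWithinAt) (fun t ht => ?_)
      (left_mem_Icc.2 h) (right_mem_Icc.2 h) h
    rw [interior_Icc] at ht
    exact mul_nonpos_of_nonneg_of_nonpos (hfactor t (Ioo_subset_Icc_self ht)).le
      (sub_nonpos.2 (hsign_le t (hγ.trans ht.1) ht.2.le))

theorem energyBound_eq {x β : ℝ} (hβ : 0 < β) (hx : sinh β / β = x) :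
    energyBound x β = 1 / 2 * β ^ 2 - β * tanh (β / 2) := by
  have hC := cosh_pos (β / 2)
  have hN : 0 < β * cosh (β / 2) - 2 * sinh (β / 2) := by
    linarith [sinh_lt_mul_cosh (half_pos hβ)]
  rw [← hx, energyBound, tanh_eq_sinh_div_cosh,
    show sinh β = 2 * sinh (β / 2) * cosh (β / 2) by rw [← sinh_two_mul]; ring_nf]
  have hD : cosh (β / 2) ^ 2 - 2 * sinh (β / 2) * cosh (β / 2) / β
      = cosh (β / 2) * (β * cosh (β / 2) - 2 * sinh (β / 2)) / β := by
    field_simp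
  rw [hD]
  field_simp

theorem energyBound_le_energy {x β : ℝ} {f g : ℝ → ℝ} (hβ : 0 < β) (hx : sinh β / β = x)
    (hfg : IsAC f g) (hf : ∫ u in (0:ℝ)..1, exp (f u) = x) : energyBound x β ≤ energy g := by
  obtain ⟨hg, hg2, hfF⟩ := hfg
  set F := fun t => ∫ s in (0:ℝ)..t, g s
  have hF : AbsolutelyContinuousOnInterval F 0 1 :=
    hg.absolutelyContinuousOnInterval_intervalIntegral left_mem_uIcc
  have hF' : ∀ᵐ t, t ∈ uIcc (0:ℝ) 1 → HasDerivAt F (g t) t :=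
    hg.ae_hasDerivAt_integral.mono fun t ht ht' => ht ht' 0 left_mem_uIcc
  have hFx : ∫ t in (0:ℝ)..1, exp (F t) = x := by
    rw [← hf]
    refine integral_congr fun t ht => ?_
    rw [uIcc_of_le zero_le_one] at ht
    simp only [F, hfF t ht]
  have hFc : ContinuousOn F (Icc 0 1) := uIcc_of_le (zero_le_one' ℝ) ▸ hF.continuousOn
  obtain ⟨T, hT, hmax⟩ := isCompact_Icc.exists_isMaxOn (nonempty_Icc.2 zero_le_one) hFc
  have hF0 : F 0 = 0 := integral_same
  have hx1 : 1 < x := by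
    rw [← hx, lt_div_iff₀ hβ, one_mul]
    exact self_lt_sinh_iff.2 hβ
  have hxM : x ≤ exp (F T) := by
    rw [← hFx]
    calc ∫ t in (0:ℝ)..1, exp (F t) ≤ ∫ t in (0:ℝ)..1, exp (F T) :=
          integral_mono_on zero_le_one
            (continuous_exp.comp_continuousOn hF.continuousOn).intervalIntegrable
            intervalIntegrable_const fun t ht => exp_le_exp.2 (hmax ht)
      _ = exp (F T) := by simp
  have hM : 0 < F T := by
    by_contra! h
    linarith [exp_le_one_iff.2 h]
  set γ := 2 * arcosh (exp (F T / 2))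
  have hγ : 0 < γ := mul_pos two_pos (arcosh_pos (one_lt_exp_iff.2 (half_pos hM)))
  have hC : cosh (γ / 2) ^ 2 = exp (F T) := by
    rw [mul_div_cancel_left₀ _ two_ne_zero, cosh_arcosh (one_le_exp (half_pos hM).le),
      ← exp_nat_mul]
    ring_nf
  have hbound : ∀ c, 0 ≤ c → c * (γ * cosh (γ / 2) - 2 * sinh (γ / 2))
      - c ^ 2 / 2 * (cosh (γ / 2) ^ 2 - x) ≤ energy g := by
    intro c hc
    have := energy_ge_of_isMaxOn hF hF' hg hg2 hT hmax hc
    rw [hF0, hFx, ← hC, calibration_cosh_sq_zero hγ.le] at this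
    linarith
  obtain ⟨hd, hle⟩ := sq_div_le_of_forall_mul_sub_le
    (by linarith [sinh_lt_mul_cosh (half_pos hγ)]) hbound
  exact (energyBound_le hβ hx hγ (sub_pos.1 hd)).trans hle

theorem energy_nonneg (g : ℝ → ℝ) : 0 ≤ energy g :=
  mul_nonneg one_half_pos.le (integral_nonneg zero_le_one fun _ _ => sq_nonneg _)

theorem JBS_optimal_path_right_general (x β : ℝ) (hβ : 0 ≤ β)
    (hconv : β = 0 → x = 1) (heq : β ≠ 0 → Real.sinh β / β = x)
    (φ : ℝ → ℝ)
    (hφ : ∀ u, φ u = β * u - 2 * Real.log ((Real.exp (β * u) + Real.exp β) / (1 + Real.exp β))) :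
    φ 0 = 0 ∧
    (∫ u in (0:ℝ)..1, Real.exp (φ u)) = x ∧
    (1 / 2) * (∫ u in (0:ℝ)..1, (deriv φ u) ^ 2) = (1 / 2) * β ^ 2 - β * Real.tanh (β / 2) ∧
    JBS x = (1 / 2) * β ^ 2 - β * Real.tanh (β / 2) := by
  obtain rfl : φ = optimalPath β := funext hφ
  have henergy : (1 / 2) * ∫ u in (0:ℝ)..1, deriv (optimalPath β) u ^ 2
      = (1 / 2) * β ^ 2 - β * tanh (β / 2) := by
    rw [integral_sq_deriv_optimalPath]; ring
  have hint : ∫ u in (0:ℝ)..1, exp (optimalPath β u) = x := by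
    rcases eq_or_ne β 0 with rfl | hβ0
    · simp [optimalPath, hconv rfl]
    · rw [integral_exp_optimalPath hβ0, heq hβ0]
  have hlower : ∀ f g, IsAC f g → ∫ u in (0:ℝ)..1, exp (f u) = x →
      (1 / 2) * β ^ 2 - β * tanh (β / 2) ≤ energy g := by
    intro f g hfg hf
    rcases hβ.eq_or_lt with rfl | hβ0
    · simpa using energy_nonneg g
    · rw [← energyBound_eq hβ0 (heq hβ0.ne')]
      exact energyBound_le_energy hβ0 (heq hβ0.ne') hfg hf
  refine ⟨optimalPath_zero β, hint, henergy, IsLeast.csInf_eq ⟨?_, ?_⟩⟩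
  · exact ⟨_, _, isAC_optimalPath β, hint, henergy.symm⟩
  · rintro _ ⟨f, g, hfg, hf, rfl⟩
    exact hlower f g hfg hf

/-- For `x ≥ 1` and `β ≥ 0` with `sinh(β)/β = x` (convention `1` at `β = 0`),
the path `φ(u) = βu − 2·log((e^{βu} + e^β)/(1 + e^β))` satisfies `φ(0) = 0`,
`∫₀¹ exp(φ(u)) du = x`, has energy `(1/2)β² − β·tanh(β/2)`, and attains the infimum
defining `J_BS(x)`. -/
theorem JBS_optimal_path_right (x β : ℝ) (hx : 1 ≤ x) (hβ : 0 ≤ β)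
    (hconv : β = 0 → x = 1) (heq : β ≠ 0 → Real.sinh β / β = x)
    (φ : ℝ → ℝ)
    (hφ : ∀ u, φ u = β * u - 2 * Real.log ((Real.exp (β * u) + Real.exp β) / (1 + Real.exp β))) :
    φ 0 = 0 ∧
    (∫ u in (0:ℝ)..1, Real.exp (φ u)) = x ∧
    (1 / 2) * (∫ u in (0:ℝ)..1, (deriv φ u) ^ 2) = (1 / 2) * β ^ 2 - β * Real.tanh (β / 2) ∧
    JBS x = (1 / 2) * β ^ 2 - β * Real.tanh (β / 2) :=
  JBS_optimal_path_right_general x β hβ hconv heq φ hφ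
end

section
/- Let 0 < x < 1 and τ ∈ (0,1), and let ξ ∈ (0, π/2) satisfy sin(2ξ)/(2ξ) = x·exp((2τ/(1−τ))·ξ·tan(ξ)). Then J_fwd(x, τ) = (2/(1−τ)²) · ( τ·ξ²·tan²(ξ) − (1−τ)·ξ² + (1−τ)·ξ·tan(ξ) ). -/
open MeasureTheory Set

/-!
Put `c = ξ / (1 - τ)`. The function `G = riccatiSol c`, `G t = 2c·tan (c (t - 1))`, solves
the Riccati equation `G' = G² / 2 + 2c²` with `G 1 = 0`, and the candidate minimiser
`ψ = optPath c τ` has slope `G τ` on `[0, τ]` and `G` on `[τ, 1]`. On `[τ, 1]` we have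
`(log G')' = G = ψ'`, so `G' = κ⁻¹ e^ψ` for a constant `κ > 0`: this is the Euler–Lagrange
equation with a Lagrange multiplier.

For an admissible `f` with derivative `g`, convexity of the energy gives
`E g ≥ E ψ' + ∫₀¹ ψ' (g - ψ')`. Integrating by parts (`f - ψ` is absolutely continuous and
`G 1 = 0`), the last integral is `-∫_τ¹ G' (f - ψ) = -κ⁻¹ ∫_τ¹ e^ψ (f - ψ)`, which is
`≥ -κ⁻¹ ∫_τ¹ (e^f - e^ψ) = 0` by the tangent inequality `e^ψ (f - ψ) ≤ e^f - e^ψ`.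
The value of `J_fwd` then follows from `∫_τ¹ G' = -G τ` and `G² = 2G' - 4c²`.
-/

open Real

lemma exp_mul_sub_le_exp_sub_exp (a b : ℝ) : exp a * (b - a) ≤ exp b - exp a := by
  have := mul_le_mul_of_nonneg_left (add_one_le_exp (b - a)) (exp_pos a).le
  rw [← exp_add, add_sub_cancel] at this
  linarith

lemma IsAC.continuousOn {f g : ℝ → ℝ} (h : IsAC f g) : ContinuousOn f (Icc 0 1) := by
  have := intervalIntegral.continuousOn_primitive_interval' h.1 (left_mem_uIcc (a := 0) (b := 1))
  rw [uIcc_of_le zero_le_one] at this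
  exact this.congr h.2.2

lemma energy_add_integral_mul_sub_le {g₀ g : ℝ → ℝ} (hg₀ : ContinuousOn g₀ (Icc 0 1))
    (hg : IntervalIntegrable g volume 0 1)
    (hg2 : IntervalIntegrable (fun t => g t ^ 2) volume 0 1) :
    energy g₀ + ∫ t in (0:ℝ)..1, g₀ t * (g t - g₀ t) ≤ energy g := by
  rw [← uIcc_of_le zero_le_one] at hg₀
  have hg₀2 : IntervalIntegrable (fun t => 1 / 2 * g₀ t ^ 2) volume 0 1 :=
    ((hg₀.pow 2).intervalIntegrable).const_mul _
  have hmul : IntervalIntegrable (fun t => g₀ t * (g t - g₀ t)) volume 0 1 :=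
    (hg.sub hg₀.intervalIntegrable).continuousOn_mul hg₀
  calc energy g₀ + ∫ t in (0:ℝ)..1, g₀ t * (g t - g₀ t)
      = ∫ t in (0:ℝ)..1, (1 / 2 * g₀ t ^ 2 + g₀ t * (g t - g₀ t)) := by
        rw [energy, intervalIntegral.integral_add hg₀2 hmul, intervalIntegral.integral_const_mul]
    _ ≤ ∫ t in (0:ℝ)..1, 1 / 2 * g t ^ 2 :=
        intervalIntegral.integral_mono_on zero_le_one (hg₀2.add hmul) (hg2.const_mul _)
          fun t _ => by nlinarith [sq_nonneg (g t - g₀ t)]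
    _ = energy g := intervalIntegral.integral_const_mul _ _

lemma integral_mul_eq_sub_of_ae_hasDerivAt {G F h : ℝ → ℝ} {a b : ℝ}
    (hG : ContDiffOn ℝ 1 G (uIcc a b)) (hF : AbsolutelyContinuousOnInterval F a b)
    (hFh : ∀ᵐ t, t ∈ uIcc a b → HasDerivAt F (h t) t) :
    ∫ t in a..b, G t * h t = G b * F b - G a * F a - ∫ t in a..b, deriv G t * F t := by
  rw [← hG.absolutelyContinuousOnInterval.integral_mul_deriv_eq_deriv_mul hF]
  refine intervalIntegral.integral_congr_ae ?_
  filter_upwards [hFh] with t ht htI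
  rw [(ht (uIoc_subset_uIcc htI)).deriv]

noncomputable def riccatiSol (c t : ℝ) : ℝ := 2 * c * tan (c * (t - 1))

section
variable {c t : ℝ}

lemma riccatiSol_one : riccatiSol c 1 = 0 := by simp [riccatiSol]

lemma cos_pos_of_mem_Icc {τ : ℝ} (hc : 0 ≤ c) (hcτ : c * (1 - τ) < π / 2) (ht : t ∈ Icc τ 1) :
    0 < cos (c * (t - 1)) := by
  apply cos_pos_of_mem_Ioo
  constructor <;> nlinarith [ht.1, ht.2, pi_pos]

lemma hasDerivAt_riccatiSol (h : cos (c * (t - 1)) ≠ 0) :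
    HasDerivAt (riccatiSol c) (riccatiSol c t ^ 2 / 2 + 2 * c ^ 2) t := by
  have hlin : HasDerivAt (fun s => c * (s - 1)) c t := by
    simpa using ((hasDerivAt_id t).sub_const 1).const_mul c
  refine (((Real.hasDerivAt_tan h).comp t hlin).const_mul (2 * c)).congr_deriv ?_
  rw [riccatiSol, one_div, ← inv_one_add_tan_sq h, inv_inv]
  ring

lemma contDiffOn_riccatiSol {s : Set ℝ} (h : ∀ t ∈ s, cos (c * (t - 1)) ≠ 0) :
    ContDiffOn ℝ 1 (riccatiSol c) s := fun t ht =>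
  have hlin : ContDiffAt ℝ 1 (fun s => c * (s - 1)) t := by fun_prop
  (contDiffAt_const.mul ((Real.contDiffAt_tan.2 (h t ht)).comp t hlin)).contDiffWithinAt

lemma hasDerivAt_log_riccatiSol (hc : c ≠ 0) (h : cos (c * (t - 1)) ≠ 0) :
    HasDerivAt (fun s => log (riccatiSol c s ^ 2 / 2 + 2 * c ^ 2)) (riccatiSol c t) t := by
  have hW : riccatiSol c t ^ 2 / 2 + 2 * c ^ 2 ≠ 0 := by positivity
  have := ((((hasDerivAt_riccatiSol h).fun_pow 2).div_const 2).add_const (2 * c ^ 2)).log hW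
  convert this using 1
  field_simp
  ring

lemma contDiffOn_riccatiSol_Icc {τ : ℝ} (hc : 0 ≤ c) (hcτ : c * (1 - τ) < π / 2) :
    ContDiffOn ℝ 1 (riccatiSol c) (Icc τ 1) :=
  contDiffOn_riccatiSol fun _ ht => (cos_pos_of_mem_Icc hc hcτ ht).ne'

lemma intervalIntegrable_riccatiSol_sq_div_two_add {τ : ℝ} (hc : 0 ≤ c) (hτ : τ ≤ 1)
    (hcτ : c * (1 - τ) < π / 2) :
    IntervalIntegrable (fun t => riccatiSol c t ^ 2 / 2 + 2 * c ^ 2) volume τ 1 := by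
  refine ContinuousOn.intervalIntegrable ?_
  rw [uIcc_of_le hτ]
  exact (((contDiffOn_riccatiSol_Icc hc hcτ).continuousOn.pow 2).div_const 2).add
    continuousOn_const

lemma integral_riccatiSol_sq_div_two_add {τ : ℝ} (hc : 0 ≤ c) (hτ : τ ≤ 1)
    (hcτ : c * (1 - τ) < π / 2) :
    ∫ t in τ..1, (riccatiSol c t ^ 2 / 2 + 2 * c ^ 2) = -riccatiSol c τ := by
  rw [intervalIntegral.integral_eq_sub_of_hasDerivAt (f := riccatiSol c), riccatiSol_one,
    zero_sub]
  · rw [uIcc_of_le hτ]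
    exact fun t ht => hasDerivAt_riccatiSol (cos_pos_of_mem_Icc hc hcτ ht).ne'
  · exact intervalIntegrable_riccatiSol_sq_div_two_add hc hτ hcτ

end

noncomputable def optDeriv (c τ t : ℝ) : ℝ := riccatiSol c (max t τ)

noncomputable def optPath (c τ t : ℝ) : ℝ := ∫ s in (0:ℝ)..t, optDeriv c τ s

section
variable {c τ : ℝ}

lemma optDeriv_of_le {t : ℝ} (ht : t ≤ τ) : optDeriv c τ t = riccatiSol c τ := by
  rw [optDeriv, max_eq_right ht]

lemma optDeriv_of_ge {t : ℝ} (ht : τ ≤ t) : optDeriv c τ t = riccatiSol c t := by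
  rw [optDeriv, max_eq_left ht]

lemma continuousOn_optDeriv (hc : 0 ≤ c) (hτ : τ ≤ 1) (hcτ : c * (1 - τ) < π / 2) :
    ContinuousOn (optDeriv c τ) (Iic 1) :=
  (contDiffOn_riccatiSol_Icc hc hcτ).continuousOn.comp (by fun_prop)
    fun _ ht => ⟨le_max_right _ _, max_le ht hτ⟩

lemma intervalIntegrable_optDeriv (hc : 0 ≤ c) (hτ : τ ≤ 1) (hcτ : c * (1 - τ) < π / 2)
    {a b : ℝ} (ha : a ≤ 1) (hb : b ≤ 1) : IntervalIntegrable (optDeriv c τ) volume a b :=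
  ((continuousOn_optDeriv hc hτ hcτ).mono fun _ ht => ht.2.trans (max_le ha hb)).intervalIntegrable

lemma isAC_optPath (hc : 0 ≤ c) (hτ : τ ≤ 1) (hcτ : c * (1 - τ) < π / 2) :
    IsAC (optPath c τ) (optDeriv c τ) := by
  refine ⟨intervalIntegrable_optDeriv hc hτ hcτ zero_le_one le_rfl, ?_, fun _ _ => rfl⟩
  exact (((continuousOn_optDeriv hc hτ hcτ).mono
    fun _ ht => ht.2.trans (max_le zero_le_one le_rfl)).pow 2).intervalIntegrable

lemma integral_optDeriv_of_le (hτ : 0 ≤ τ) :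
    ∫ t in (0:ℝ)..τ, optDeriv c τ t = τ * riccatiSol c τ := by
  rw [intervalIntegral.integral_congr fun t ht => optDeriv_of_le (uIcc_of_le hτ ▸ ht).2,
    intervalIntegral.integral_const, sub_zero, smul_eq_mul]

lemma optPath_of_mem_Icc (hc : 0 < c) (hτ : 0 ≤ τ) (hcτ : c * (1 - τ) < π / 2) {t : ℝ}
    (ht : t ∈ Icc τ 1) :
    optPath c τ t = τ * riccatiSol c τ + (log (riccatiSol c t ^ 2 / 2 + 2 * c ^ 2)
      - log (riccatiSol c τ ^ 2 / 2 + 2 * c ^ 2)) := by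
  have hτ1 : τ ≤ 1 := ht.1.trans ht.2
  rw [optPath, ← intervalIntegral.integral_add_adjacent_intervals (b := τ)
    (intervalIntegrable_optDeriv hc.le hτ1 hcτ zero_le_one hτ1)
    (intervalIntegrable_optDeriv hc.le hτ1 hcτ hτ1 ht.2), integral_optDeriv_of_le hτ,
    intervalIntegral.integral_eq_sub_of_hasDerivAt]
  · intro s hs
    rw [uIcc_of_le ht.1] at hs
    rw [optDeriv_of_ge hs.1]
    exact hasDerivAt_log_riccatiSol hc.ne'
      (cos_pos_of_mem_Icc hc.le hcτ ⟨hs.1, hs.2.trans ht.2⟩).ne'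
  · exact intervalIntegrable_optDeriv hc.le hτ1 hcτ hτ1 ht.2

lemma exp_optPath (hc : 0 < c) (hτ : 0 ≤ τ) (hcτ : c * (1 - τ) < π / 2) {t : ℝ}
    (ht : t ∈ Icc τ 1) :
    exp (optPath c τ t) = exp (τ * riccatiSol c τ) / (riccatiSol c τ ^ 2 / 2 + 2 * c ^ 2)
      * (riccatiSol c t ^ 2 / 2 + 2 * c ^ 2) := by
  rw [optPath_of_mem_Icc hc hτ hcτ ht, exp_add, exp_sub, exp_log (by positivity),
    exp_log (by positivity)]
  ring

lemma integral_exp_optPath (hc : 0 < c) (hτ : τ ∈ Icc 0 1) (hcτ : c * (1 - τ) < π / 2) :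
    ∫ t in τ..1, exp (optPath c τ t)
      = exp (τ * riccatiSol c τ) / (riccatiSol c τ ^ 2 / 2 + 2 * c ^ 2) * -riccatiSol c τ := by
  rw [intervalIntegral.integral_congr fun t ht =>
      exp_optPath hc hτ.1 hcτ (uIcc_of_le hτ.2 ▸ ht),
    intervalIntegral.integral_const_mul, integral_riccatiSol_sq_div_two_add hc.le hτ.2 hcτ]

lemma integral_optDeriv_sq (hc : 0 ≤ c) (hτ : τ ∈ Icc 0 1) (hcτ : c * (1 - τ) < π / 2) :
    ∫ t in (0:ℝ)..1, optDeriv c τ t ^ 2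
      = τ * riccatiSol c τ ^ 2 - 2 * riccatiSol c τ - 4 * c ^ 2 * (1 - τ) := by
  have hint {a b : ℝ} (ha : a ≤ 1) (hb : b ≤ 1) :
      IntervalIntegrable (fun t => optDeriv c τ t ^ 2) volume a b :=
    ((continuousOn_optDeriv hc hτ.2 hcτ).mono fun _ ht => ht.2.trans (max_le ha hb)).pow 2
      |>.intervalIntegrable
  have hleft : ∫ t in (0:ℝ)..τ, optDeriv c τ t ^ 2 = τ * riccatiSol c τ ^ 2 := by
    rw [intervalIntegral.integral_congr fun t ht => by
        rw [optDeriv_of_le (uIcc_of_le hτ.1 ▸ ht).2],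
      intervalIntegral.integral_const, sub_zero, smul_eq_mul]
  have hright : ∫ t in τ..1, optDeriv c τ t ^ 2
      = ∫ t in τ..1, (2 * (riccatiSol c t ^ 2 / 2 + 2 * c ^ 2) - 4 * c ^ 2) := by
    refine intervalIntegral.integral_congr fun t ht => ?_
    rw [optDeriv_of_ge (uIcc_of_le hτ.2 ▸ ht).1]
    ring
  rw [← intervalIntegral.integral_add_adjacent_intervals (hint zero_le_one hτ.2)
    (hint hτ.2 le_rfl), hleft, hright, intervalIntegral.integral_sub
    ((intervalIntegrable_riccatiSol_sq_div_two_add hc hτ.2 hcτ).const_mul 2)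
    intervalIntegrable_const, intervalIntegral.integral_const_mul,
    integral_riccatiSol_sq_div_two_add hc hτ.2 hcτ, intervalIntegral.integral_const, smul_eq_mul]
  ring

lemma integral_optDeriv_mul_eq (hc : 0 ≤ c) (hτ : τ ∈ Icc 0 1) (hcτ : c * (1 - τ) < π / 2)
    {h : ℝ → ℝ} (hh : IntervalIntegrable h volume 0 1) :
    ∫ t in (0:ℝ)..1, optDeriv c τ t * h t
      = -∫ t in τ..1, (riccatiSol c t ^ 2 / 2 + 2 * c ^ 2) * ∫ s in (0:ℝ)..t, h s := by
  set F := fun t => ∫ s in (0:ℝ)..t, h s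
  have hsub {a b : ℝ} (ha : a ∈ Icc (0:ℝ) 1) (hb : b ∈ Icc (0:ℝ) 1) :
      uIcc a b ⊆ uIcc 0 1 := by
    rw [uIcc_of_le zero_le_one]; exact uIcc_subset_Icc ha hb
  have hint {a b : ℝ} (ha : a ∈ Icc (0:ℝ) 1) (hb : b ∈ Icc (0:ℝ) 1) :
      IntervalIntegrable (fun t => optDeriv c τ t * h t) volume a b :=
    (hh.mono_set (hsub ha hb)).continuousOn_mul
      ((continuousOn_optDeriv hc hτ.2 hcτ).mono fun _ ht => ht.2.trans (max_le ha.2 hb.2))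
  have h0 : (0:ℝ) ∈ Icc (0:ℝ) 1 := left_mem_Icc.2 zero_le_one
  have h1 : (1:ℝ) ∈ Icc (0:ℝ) 1 := right_mem_Icc.2 zero_le_one
  have hleft : ∫ t in (0:ℝ)..τ, optDeriv c τ t * h t = riccatiSol c τ * F τ := by
    rw [intervalIntegral.integral_congr fun t ht => by
        rw [optDeriv_of_le (uIcc_of_le hτ.1 ▸ ht).2],
      intervalIntegral.integral_const_mul]
  have hright : ∫ t in τ..1, optDeriv c τ t * h t
      = -(riccatiSol c τ * F τ)
        - ∫ t in τ..1, (riccatiSol c t ^ 2 / 2 + 2 * c ^ 2) * F t := by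
    have hF : AbsolutelyContinuousOnInterval F τ 1 :=
      (hh.absolutelyContinuousOnInterval_intervalIntegral left_mem_uIcc).mono (hsub hτ h1)
    have hFh : ∀ᵐ t, t ∈ uIcc τ 1 → HasDerivAt F (h t) t := by
      filter_upwards [hh.ae_hasDerivAt_integral] with t ht htI
      exact ht (hsub hτ h1 htI) 0 left_mem_uIcc
    have hderiv : ∀ t ∈ uIcc τ 1, deriv (riccatiSol c) t * F t
        = (riccatiSol c t ^ 2 / 2 + 2 * c ^ 2) * F t := fun t ht => by
      rw [(hasDerivAt_riccatiSol
        (cos_pos_of_mem_Icc hc hcτ (uIcc_of_le hτ.2 ▸ ht)).ne').deriv]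
    rw [intervalIntegral.integral_congr fun t ht => by
        rw [optDeriv_of_ge (uIcc_of_le hτ.2 ▸ ht).1],
      integral_mul_eq_sub_of_ae_hasDerivAt (uIcc_of_le hτ.2 ▸ contDiffOn_riccatiSol_Icc hc hcτ)
        hF hFh, riccatiSol_one, zero_mul, zero_sub, intervalIntegral.integral_congr hderiv]
  rw [← intervalIntegral.integral_add_adjacent_intervals (hint h0 hτ) (hint hτ h1), hleft,
    hright]
  ring

lemma energy_optDeriv_le (hc : 0 < c) (hτ : τ ∈ Icc 0 1) (hcτ : c * (1 - τ) < π / 2)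
    {f g : ℝ → ℝ} (hfg : IsAC f g)
    (hcon : ∫ t in τ..1, exp (f t) = ∫ t in τ..1, exp (optPath c τ t)) :
    energy (optDeriv c τ) ≤ energy g := by
  have hψ := isAC_optPath hc.le hτ.2 hcτ
  refine le_trans ?_ (energy_add_integral_mul_sub_le
    ((continuousOn_optDeriv hc.le hτ.2 hcτ).mono fun _ ht => ht.2) hfg.1 hfg.2.1)
  suffices ∫ t in (0:ℝ)..1, optDeriv c τ t * (g t - optDeriv c τ t) ≥ 0 by linarith
  rw [integral_optDeriv_mul_eq hc.le hτ hcτ (hfg.1.sub hψ.1), ge_iff_le, neg_nonneg]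
  set κ := exp (τ * riccatiSol c τ) / (riccatiSol c τ ^ 2 / 2 + 2 * c ^ 2)
  have hκ : 0 < κ := by positivity
  have hτ01 : Icc τ 1 ⊆ Icc 0 1 := Icc_subset_Icc_left hτ.1
  have hweight : ∀ t ∈ uIcc τ 1,
      (riccatiSol c t ^ 2 / 2 + 2 * c ^ 2) * ∫ s in (0:ℝ)..t, (g s - optDeriv c τ s)
        = κ⁻¹ * (exp (optPath c τ t) * (f t - optPath c τ t)) := by
    intro t ht
    rw [uIcc_of_le hτ.2] at ht
    have hsub : uIcc 0 t ⊆ uIcc 0 1 := by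
      rw [uIcc_of_le zero_le_one, uIcc_of_le (hτ.1.trans ht.1)]
      exact Icc_subset_Icc_right ht.2
    rw [intervalIntegral.integral_sub (hfg.1.mono_set hsub) (hψ.1.mono_set hsub),
      ← hfg.2.2 t (hτ01 ht), ← optPath, exp_optPath hc hτ.1 hcτ ht]
    simp only [κ]
    field_simp
  have hf := hfg.continuousOn.mono hτ01
  have hψ' := hψ.continuousOn.mono hτ01
  rw [← uIcc_of_le hτ.2] at hf hψ'
  rw [intervalIntegral.integral_congr hweight, intervalIntegral.integral_const_mul]
  refine mul_nonpos_of_nonneg_of_nonpos (inv_nonneg.2 hκ.le) ?_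
  calc ∫ t in τ..1, exp (optPath c τ t) * (f t - optPath c τ t)
      ≤ ∫ t in τ..1, (exp (f t) - exp (optPath c τ t)) :=
        intervalIntegral.integral_mono_on hτ.2
          (hψ'.rexp.mul (hf.sub hψ')).intervalIntegrable
          (hf.rexp.sub hψ'.rexp).intervalIntegrable
          fun t _ => exp_mul_sub_le_exp_sub_exp _ _
    _ = 0 := by
      rw [intervalIntegral.integral_sub hf.rexp.intervalIntegrable hψ'.rexp.intervalIntegrable,
        hcon, sub_self]

end

section
variable {τ ξ : ℝ}

lemma riccatiSol_div_one_sub (hτ : τ ≠ 1) :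
    riccatiSol (ξ / (1 - τ)) τ = -(2 * (ξ / (1 - τ)) * tan ξ) := by
  have : ξ / (1 - τ) * (τ - 1) = -ξ := by
    field_simp [sub_ne_zero.2 hτ.symm]
    ring
  rw [riccatiSol, this, tan_neg]
  ring

lemma one_div_mul_integral_exp_optPath (hτ : τ ∈ Ioo 0 1) (hξ : ξ ∈ Ioo 0 (π / 2)) :
    1 / (1 - τ) * ∫ t in τ..1, exp (optPath (ξ / (1 - τ)) τ t)
      = sin (2 * ξ) / (2 * ξ) * exp (-(2 * τ / (1 - τ) * ξ * tan ξ)) := by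
  have h1τ : 0 < 1 - τ := sub_pos.2 hτ.2
  rw [integral_exp_optPath (div_pos hξ.1 h1τ) (Ioo_subset_Icc_self hτ)
    ((div_mul_cancel₀ ξ h1τ.ne').symm ▸ hξ.2), riccatiSol_div_one_sub hτ.2.ne,
    sin_eq_two_mul_tan_half_div_one_add_tan_half_sq, mul_div_cancel_left₀ ξ two_ne_zero]
  have hξ0 := hξ.1.ne'
  field_simp
  ring

lemma energy_optDeriv (hτ : τ ∈ Ioo 0 1) (hξ : ξ ∈ Ioo 0 (π / 2)) :
    energy (optDeriv (ξ / (1 - τ)) τ)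
      = 2 / (1 - τ) ^ 2 * (τ * ξ ^ 2 * tan ξ ^ 2 - (1 - τ) * ξ ^ 2 + (1 - τ) * ξ * tan ξ) := by
  have h1τ : 0 < 1 - τ := sub_pos.2 hτ.2
  rw [energy, integral_optDeriv_sq (div_pos hξ.1 h1τ).le (Ioo_subset_Icc_self hτ)
    ((div_mul_cancel₀ ξ h1τ.ne').symm ▸ hξ.2), riccatiSol_div_one_sub hτ.2.ne]
  field_simp
  ring

end

theorem Jfwd_closed_form_put_general (x τ ξ : ℝ)
    (hτ : τ ∈ Ioo (0:ℝ) 1) (hξ : ξ ∈ Ioo (0:ℝ) (Real.pi / 2))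
    (heq : Real.sin (2 * ξ) / (2 * ξ) = x * Real.exp ((2 * τ / (1 - τ)) * ξ * Real.tan ξ)) :
    Jfwd x τ = (2 / (1 - τ) ^ 2) *
      (τ * ξ ^ 2 * Real.tan ξ ^ 2 - (1 - τ) * ξ ^ 2 + (1 - τ) * ξ * Real.tan ξ) := by
  have h1τ : 0 < 1 - τ := sub_pos.2 hτ.2
  have hc : 0 < ξ / (1 - τ) := div_pos hξ.1 h1τ
  have hcτ : ξ / (1 - τ) * (1 - τ) < π / 2 := (div_mul_cancel₀ ξ h1τ.ne').symm ▸ hξ.2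
  have hτ' : τ ∈ Icc (0:ℝ) 1 := Ioo_subset_Icc_self hτ
  have hconstraint : 1 / (1 - τ) * ∫ t in τ..1, exp (optPath (ξ / (1 - τ)) τ t) = x := by
    rw [one_div_mul_integral_exp_optPath hτ hξ, heq, mul_assoc, ← exp_add, add_neg_cancel,
      exp_zero, mul_one]
  rw [Jfwd, ← energy_optDeriv hτ hξ]
  refine IsLeast.csInf_eq ⟨⟨optPath _ τ, optDeriv _ τ, isAC_optPath hc.le hτ'.2 hcτ,
    hconstraint, rfl⟩, ?_⟩
  rintro _ ⟨f, g, hfg, hfx, rfl⟩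
  exact energy_optDeriv_le hc hτ' hcτ hfg
    (mul_left_cancel₀ (one_div_ne_zero h1τ.ne') (hfx.trans hconstraint.symm))

/-- For `0 < x < 1`, `τ ∈ (0,1)` and `ξ ∈ (0, π/2)` with
`sin(2ξ)/(2ξ) = x·exp((2τ/(1−τ))·ξ·tan(ξ))`, the forward rate function satisfies
`J_fwd(x, τ) = (2/(1−τ)²)·(τξ²tan²ξ − (1−τ)ξ² + (1−τ)ξ·tan ξ)`. -/
theorem Jfwd_closed_form_put (x τ ξ : ℝ) (hx0 : 0 < x) (hx1 : x < 1)
    (hτ : τ ∈ Ioo (0:ℝ) 1) (hξ : ξ ∈ Ioo (0:ℝ) (Real.pi / 2))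
    (heq : Real.sin (2 * ξ) / (2 * ξ) = x * Real.exp ((2 * τ / (1 - τ)) * ξ * Real.tan ξ)) :
    Jfwd x τ = (2 / (1 - τ) ^ 2) *
      (τ * ξ ^ 2 * Real.tan ξ ^ 2 - (1 - τ) * ξ ^ 2 + (1 - τ) * ξ * Real.tan ξ) :=
  Jfwd_closed_form_put_general x τ ξ hτ hξ heq
end
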